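/- arXiv:2207.06158 — 2 statements merged into one kernel-verified Lean document; each statement's English description precedes it below -/
import Mathlib

section
/- For every N ≥ 1, every initial condition a and boundary conditions, the regularized solution satisfies: (i) for every 1 ≤ n ≤ N, (u_n^(N)(τ_n), u_{n+1}^(N)(τ_n), u_{n+2}^(N)(τ_n), …) = ψ^(N−n+1)(σ_+^{n−1}(a)); (ii) more generally, for a non-integer lattice time written uniquely as t = i + τ_{n_1} + ⋯ + τ_{n_c} with integer i ≥ 0, c ≥ 1 and 1 ≤ n_1 < ⋯ < n_c ≤ N, defining the state u^(N)(t) = (u_{n_c}^(N)(t), u_{n_c+1}^(N)(t), …) ∈ X^ℕ, one has u^(N)(t) = ψ^(N−n_1+1)(σ_+^{n_1−1}(u^(N)(i))) if c = 1, and u^(N)(t) = ψ^(N−n_c+1)(σ_+^{n_c−n_{c−1}}(u^(N)(t − τ_{n_c}))) if c ≥ 2, where for integer times u^(N)(i) = (u_1^(N)(i), u_2^(N)(i), …). -/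
open Filter Topology

namespace SSRG

variable {X : Type*}

/-- Upward shift map `σ₊(a) = (a₂, a₃, …)`. -/
def sigPlus (a : ℕ → X) : ℕ → X := fun i => a (i + 1)

/-- Downward shift map `σ₋(a) = (0, a₁, a₂, …)`. -/
def sigMinus [Zero X] (a : ℕ → X) : ℕ → X := fun i =>
  match i with
  | 0 => 0
  | j + 1 => a j

/-- Coupling map `ξ(a) = (f(a₁,a₂), g(a₁,a₂), 0, 0, …)`. -/
def xiMap [Zero X] (f g : X → X → X) (a : ℕ → X) : ℕ → X := fun i =>
  match i with
  | 0 => f (a 0) (a 1)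
  | 1 => g (a 0) (a 1)
  | _ + 2 => 0

/-- Boundary coupling map `β_b(a) = (g(b,a₁), 0, 0, …)`. -/
def betaMap [Zero X] (g : X → X → X) (b : X) (a : ℕ → X) : ℕ → X := fun i =>
  match i with
  | 0 => g b (a 0)
  | _ + 1 => 0

/-- The renormalization group operator `R_g[ψ] = σ₋ ∘ ψ ∘ ψ ∘ σ₊ + ξ`. -/
def RGop [AddCommMonoid X] (f g : X → X → X) (ψ : (ℕ → X) → (ℕ → X)) :
    (ℕ → X) → (ℕ → X) :=
  fun a => sigMinus (ψ (ψ (sigPlus a))) + xiMap f g a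

/-- The ideal equation at scale `n ≥ 1` and time `t = m·2⁻ⁿ`, `m ≥ 1`.
A field `u : ℕ → ℕ → X` records `u n m = uₙ(m·τₙ)`; row `0` is the boundary row,
`u 0 t = b_t` at integer times `t`. -/
def IdealEq [AddCommMonoid X] (f g : X → X → X) (u : ℕ → ℕ → X) (n m : ℕ) : Prop :=
  if m % 2 = 1 then
    u n m = f (u n (m - 1)) (u (n + 1) (2 * (m - 1)))
  else
    u n m = f (u n (m - 1)) (u (n + 1) (2 * (m - 1))) +
      g (u (n - 1) ((m - 2) / 2)) (u n (m - 2))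

/-- The regularized solution at regularization scale number `N`, with initial
conditions `a` (so `uₙ(0) = aₙ = a (n-1)` for `1 ≤ n ≤ N`) and boundary conditions
`b` (`u₀(t) = b t`): all variables at scales `n > N` vanish and the ideal equations
hold for `1 ≤ n ≤ N`. -/
def IsRegSol [AddCommMonoid X] (f g : X → X → X) (N : ℕ) (a b : ℕ → X)
    (u : ℕ → ℕ → X) : Prop :=
  (∀ m, u 0 m = b m) ∧
  (∀ n, 1 ≤ n → n ≤ N → u n 0 = a (n - 1)) ∧
  (∀ n, N < n → ∀ m, u n m = 0) ∧
  (∀ n m, 1 ≤ n → n ≤ N → 1 ≤ m → IdealEq f g u n m)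

/-- The state `u(1/2) = (u₁(1/2), u₂(1/2), …)` of a field. -/
def halfState (u : ℕ → ℕ → X) : ℕ → X := fun i => u (i + 1) (2 ^ i)

/-- The state `u(1) = (u₁(1), u₂(1), …)` of a field. -/
def unitState (u : ℕ → ℕ → X) : ℕ → X := fun i => u (i + 1) (2 ^ (i + 1))

/-- The state `u(t) = (u₁(t), u₂(t), …)` of a field at an integer time `t`. -/
def intState (u : ℕ → ℕ → X) (t : ℕ) : ℕ → X := fun i => u (i + 1) (t * 2 ^ (i + 1))

/-- A weak solution of the ideal system: initial conditions `a`, boundary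
conditions `b`, and the ideal equations at all points of the lattice. -/
def IsWeakSol [AddCommMonoid X] (f g : X → X → X) (a b : ℕ → X) (u : ℕ → ℕ → X) : Prop :=
  (∀ m, u 0 m = b m) ∧
  (∀ n, 1 ≤ n → u n 0 = a (n - 1)) ∧
  (∀ n m, 1 ≤ n → 1 ≤ m → IdealEq f g u n m)

/-- Convergence of maps: `ψ N (a_N) → ψ∞ a` for every convergent sequence `a_N → a`
in `X^ℕ` with the product topology. -/
def MapConv [TopologicalSpace X] (ψ : ℕ → (ℕ → X) → (ℕ → X))
    (ψinf : (ℕ → X) → (ℕ → X)) : Prop :=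
  ∀ (aN : ℕ → ℕ → X) (a : ℕ → X), Tendsto aN atTop (𝓝 a) →
    Tendsto (fun N => ψ N (aN N)) atTop (𝓝 (ψinf a))

/-- Shifting a level-`N` regularized solution by a scale offset `n₀ - 1` and a
time offset profile `T` (with `T` doubling under a scale increment) produces a
level-`N+1-n₀` regularized solution. -/
lemma shifted_regsol [AddCommMonoid X] (f g : X → X → X) (N : ℕ) (a b : ℕ → X)
    (u : ℕ → ℕ → X) (hu : IsRegSol f g N a b u)
    (n₀ : ℕ) (hn₀ : 1 ≤ n₀) (hn₀N : n₀ ≤ N)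
    (T : ℕ → ℕ) (hT : ∀ n', n₀ - 1 ≤ n' → T (n' + 1) = 2 * T n')
    (a' : ℕ → X) (ha' : ∀ j, n₀ + j ≤ N → u (n₀ + j) (T (n₀ + j)) = a' j) :
    IsRegSol f g (N + 1 - n₀) a' (fun m => u (n₀ - 1) (T (n₀ - 1) + m))
      (fun k m => u (n₀ - 1 + k) (T (n₀ - 1 + k) + m)) := by
  obtain ⟨hb, ha, hz, he⟩ := hu
  refine ⟨fun m => rfl, ?_, ?_, ?_⟩
  · intro k hk hkM
    have h1 : n₀ - 1 + k = n₀ + (k - 1) := by omega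
    show u (n₀ - 1 + k) (T (n₀ - 1 + k) + 0) = a' (k - 1)
    rw [h1]
    exact ha' (k - 1) (by omega)
  · intro k hk m
    exact hz _ (by omega) _
  · intro k m hk hkM hm
    have key := he (n₀ - 1 + k) (T (n₀ - 1 + k) + m) (by omega) (by omega) (by omega)
    have hT1 : T (n₀ - 1 + k + 1) = 2 * T (n₀ - 1 + k) := hT (n₀ - 1 + k) (by omega)
    have hT0 : T (n₀ - 1 + k) = 2 * T (n₀ - 1 + k - 1) := by
      have h := hT (n₀ - 1 + k - 1) (by omega)
      rwa [show n₀ - 1 + k - 1 + 1 = n₀ - 1 + k from by omega] at h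
    unfold IdealEq at key ⊢
    by_cases hodd : m % 2 = 1
    · rw [if_pos hodd]
      rw [if_pos (show (T (n₀ - 1 + k) + m) % 2 = 1 from by omega)] at key
      show u (n₀ - 1 + k) (T (n₀ - 1 + k) + m) =
        f (u (n₀ - 1 + k) (T (n₀ - 1 + k) + (m - 1)))
          (u (n₀ - 1 + k + 1) (T (n₀ - 1 + k + 1) + 2 * (m - 1)))
      rw [show T (n₀ - 1 + k) + (m - 1) = T (n₀ - 1 + k) + m - 1 from by omega,
          show T (n₀ - 1 + k + 1) + 2 * (m - 1) = 2 * (T (n₀ - 1 + k) + m - 1) from by omega]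
      exact key
    · rw [if_neg hodd]
      rw [if_neg (show ¬ (T (n₀ - 1 + k) + m) % 2 = 1 from by omega)] at key
      show u (n₀ - 1 + k) (T (n₀ - 1 + k) + m) =
        f (u (n₀ - 1 + k) (T (n₀ - 1 + k) + (m - 1)))
          (u (n₀ - 1 + k + 1) (T (n₀ - 1 + k + 1) + 2 * (m - 1))) +
        g (u (n₀ - 1 + (k - 1)) (T (n₀ - 1 + (k - 1)) + (m - 2) / 2))
          (u (n₀ - 1 + k) (T (n₀ - 1 + k) + (m - 2)))
      rw [show n₀ - 1 + (k - 1) = n₀ - 1 + k - 1 from by omega,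
          show T (n₀ - 1 + k) + (m - 1) = T (n₀ - 1 + k) + m - 1 from by omega,
          show T (n₀ - 1 + k + 1) + 2 * (m - 1) = 2 * (T (n₀ - 1 + k) + m - 1) from by omega,
          show T (n₀ - 1 + k - 1) + (m - 2) / 2 = (T (n₀ - 1 + k) + m - 2) / 2 from by omega,
          show T (n₀ - 1 + k) + (m - 2) = T (n₀ - 1 + k) + m - 2 from by omega]
      exact key

/-- The half-time flow map applied to the shifted initial data recovers the
shifted-by-one-half-step state of the original solution. -/
lemma shifted_half [AddCommMonoid X] (f g : X → X → X)
    (ψ : ℕ → (ℕ → X) → (ℕ → X))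
    (hψ : ∀ M, 1 ≤ M → ∀ (a' b' : ℕ → X) (v : ℕ → ℕ → X),
      IsRegSol f g M a' b' v → ψ M a' = halfState v)
    (N : ℕ) (a b : ℕ → X) (u : ℕ → ℕ → X) (hu : IsRegSol f g N a b u)
    (n₀ : ℕ) (hn₀ : 1 ≤ n₀) (hn₀N : n₀ ≤ N)
    (T : ℕ → ℕ) (hT : ∀ n', n₀ - 1 ≤ n' → T (n' + 1) = 2 * T n')
    (a' : ℕ → X) (ha' : ∀ j, n₀ + j ≤ N → u (n₀ + j) (T (n₀ + j)) = a' j) :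
    (fun j => u (n₀ + j) (T (n₀ + j) + 2 ^ j)) = ψ (N + 1 - n₀) a' := by
  have hreg := shifted_regsol f g N a b u hu n₀ hn₀ hn₀N T hT a' ha'
  rw [hψ (N + 1 - n₀) (by omega) a' _ _ hreg]
  funext j
  show u (n₀ + j) (T (n₀ + j) + 2 ^ j) = u (n₀ - 1 + (j + 1)) (T (n₀ - 1 + (j + 1)) + 2 ^ j)
  rw [show n₀ - 1 + (j + 1) = n₀ + j from by omega]

/-- **solutions at fractional times.**  Let `ψ M` be the half-time
flow map of the level-`M` regularized system (pinned down via `hψ`, `hex`) and let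
`u` be the level-`N` regularized solution with data `(a, b)`.  Then:
(i) for `1 ≤ n ≤ N`, the state at time `τₙ` starting at scale `n`,
`(uₙ(τₙ), u_{n+1}(τₙ), …)` (time index `2^j` at scale `n+j`), equals
`ψ^{(N-n+1)}(σ₊^{n-1}(a))`;
(ii) for a non-integer lattice time `t = i + τ_{n₁} + ⋯ + τ_{n_c}` with
`1 ≤ n₁ < ⋯ < n_c ≤ N` (so that at scale `n` the time index of `t` is
`i·2ⁿ + ∑_l 2^{n - n_l}`), the state `u^{(N)}(t) = (u_{n_c}(t), u_{n_c+1}(t), …)`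
equals `ψ^{(N-n₁+1)}(σ₊^{n₁-1}(u^{(N)}(i)))` if `c = 1`, and
`ψ^{(N-n_c+1)}(σ₊^{n_c-n_{c-1}}(u^{(N)}(t - τ_{n_c})))` if `c ≥ 2`, where the
state `u^{(N)}(t - τ_{n_c})` starts at scale `n_{c-1}`. -/
theorem statement18 {X : Type*} [MetricSpace X] [CompleteSpace X]
    [TopologicalSpace.SeparableSpace X] [AddCommMonoid X] [ContinuousAdd X]
    (f g : X → X → X) (hf : Continuous fun p : X × X => f p.1 p.2)
    (hg : Continuous fun p : X × X => g p.1 p.2)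
    (ψ : ℕ → (ℕ → X) → (ℕ → X))
    (hψ : ∀ M, 1 ≤ M → ∀ (a' b' : ℕ → X) (v : ℕ → ℕ → X),
      IsRegSol f g M a' b' v → ψ M a' = halfState v)
    (hex : ∀ M, 1 ≤ M → ∀ a' b' : ℕ → X, ∃ v : ℕ → ℕ → X, IsRegSol f g M a' b' v)
    (N : ℕ) (hN : 1 ≤ N) (a b : ℕ → X) (u : ℕ → ℕ → X)
    (hu : IsRegSol f g N a b u) :
    (∀ n, 1 ≤ n → n ≤ N →
      (fun j => u (n + j) (2 ^ j)) = ψ (N + 1 - n) (fun j => a (j + (n - 1)))) ∧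
    (∀ i n₁ : ℕ, 1 ≤ n₁ → n₁ ≤ N →
      (fun j => u (n₁ + j) (i * 2 ^ (n₁ + j) + 2 ^ j)) =
        ψ (N + 1 - n₁) (fun j => intState u i (j + (n₁ - 1)))) ∧
    (∀ (i c : ℕ) (ns : Fin (c + 2) → ℕ), StrictMono ns → 1 ≤ ns 0 →
      ns (Fin.last (c + 1)) ≤ N →
      (fun j => u (ns (Fin.last (c + 1)) + j)
          (i * 2 ^ (ns (Fin.last (c + 1)) + j) +
            ∑ l : Fin (c + 2), 2 ^ (ns (Fin.last (c + 1)) + j - ns l))) =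
        ψ (N + 1 - ns (Fin.last (c + 1)))
          (fun j =>
            (fun j' => u (ns (Fin.castSucc (Fin.last c)) + j')
                (i * 2 ^ (ns (Fin.castSucc (Fin.last c)) + j') +
                  ∑ l : Fin (c + 1),
                    2 ^ (ns (Fin.castSucc (Fin.last c)) + j' - ns (Fin.castSucc l))))
            (j + (ns (Fin.last (c + 1)) - ns (Fin.castSucc (Fin.last c)))))) := by
  refine ⟨?_, ?_, ?_⟩
  · -- (i)
    intro n hn hnN
    have h := shifted_half f g ψ hψ N a b u hu n hn hnN (fun _ => 0)
      (fun n' _ => by simp)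
      (fun j => a (j + (n - 1)))
      (by
        intro j hj
        show u (n + j) 0 = a (j + (n - 1))
        rw [hu.2.1 (n + j) (by omega) hj, show n + j - 1 = j + (n - 1) from by omega])
    rw [← h]
    funext j
    show u (n + j) (2 ^ j) = u (n + j) (0 + 2 ^ j)
    rw [Nat.zero_add]
  · -- (ii)
    intro i n₁ hn hnN
    have h := shifted_half f g ψ hψ N a b u hu n₁ hn hnN (fun n' => i * 2 ^ n')
      (fun n' _ => by ring)
      (fun j => intState u i (j + (n₁ - 1)))
      (by
        intro j hj
        show u (n₁ + j) (i * 2 ^ (n₁ + j)) = u (j + (n₁ - 1) + 1) (i * 2 ^ (j + (n₁ - 1) + 1))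
        rw [show j + (n₁ - 1) + 1 = n₁ + j from by omega])
    exact h
  · -- (iii)
    intro i c ns hmono h0 hlast
    have hqp : ns (Fin.castSucc (Fin.last c)) < ns (Fin.last (c + 1)) :=
      hmono (Fin.castSucc_lt_last _)
    have h1q : 1 ≤ ns (Fin.castSucc (Fin.last c)) :=
      le_trans h0 (hmono.monotone (Fin.zero_le _))
    have hle : ∀ l : Fin (c + 1),
        ns (Fin.castSucc l) ≤ ns (Fin.castSucc (Fin.last c)) := fun l =>
      hmono.monotone (by
        rw [Fin.le_def]
        simpa using l.is_le)
    have h := shifted_half f g ψ hψ N a b u hu (ns (Fin.last (c + 1))) (by omega) hlast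
      (fun n' => i * 2 ^ n' + ∑ l : Fin (c + 1), 2 ^ (n' - ns (Fin.castSucc l)))
      (by
        intro n' hn'
        simp only [Nat.mul_add, Finset.mul_sum]
        congr 1
        · ring
        · refine Finset.sum_congr rfl fun l _ => ?_
          have hl := hle l
          rw [show n' + 1 - ns (Fin.castSucc l) = (n' - ns (Fin.castSucc l)) + 1 from by omega,
            pow_succ]
          ring)
      (fun j =>
        (fun j' => u (ns (Fin.castSucc (Fin.last c)) + j')
            (i * 2 ^ (ns (Fin.castSucc (Fin.last c)) + j') +
              ∑ l : Fin (c + 1),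
                2 ^ (ns (Fin.castSucc (Fin.last c)) + j' - ns (Fin.castSucc l))))
        (j + (ns (Fin.last (c + 1)) - ns (Fin.castSucc (Fin.last c)))))
      (by
        intro j hj
        show u (ns (Fin.last (c + 1)) + j)
            (i * 2 ^ (ns (Fin.last (c + 1)) + j) +
              ∑ l : Fin (c + 1), 2 ^ (ns (Fin.last (c + 1)) + j - ns (Fin.castSucc l))) =
          u (ns (Fin.castSucc (Fin.last c)) +
              (j + (ns (Fin.last (c + 1)) - ns (Fin.castSucc (Fin.last c)))))
            (i * 2 ^ (ns (Fin.castSucc (Fin.last c)) +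
                (j + (ns (Fin.last (c + 1)) - ns (Fin.castSucc (Fin.last c))))) +
              ∑ l : Fin (c + 1),
                2 ^ (ns (Fin.castSucc (Fin.last c)) +
                    (j + (ns (Fin.last (c + 1)) - ns (Fin.castSucc (Fin.last c)))) -
                  ns (Fin.castSucc l)))
        rw [show ns (Fin.castSucc (Fin.last c)) +
            (j + (ns (Fin.last (c + 1)) - ns (Fin.castSucc (Fin.last c)))) =
            ns (Fin.last (c + 1)) + j from by omega])
    rw [← h]
    funext j
    show u (ns (Fin.last (c + 1)) + j)
        (i * 2 ^ (ns (Fin.last (c + 1)) + j) +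
          ∑ l : Fin (c + 2), 2 ^ (ns (Fin.last (c + 1)) + j - ns l)) =
      u (ns (Fin.last (c + 1)) + j)
        ((i * 2 ^ (ns (Fin.last (c + 1)) + j) +
          ∑ l : Fin (c + 1), 2 ^ (ns (Fin.last (c + 1)) + j - ns (Fin.castSucc l))) + 2 ^ j)
    congr 1
    rw [Fin.sum_univ_castSucc,
      show ns (Fin.last (c + 1)) + j - ns (Fin.last (c + 1)) = j from by omega,
      Nat.add_assoc]

end SSRG
end

section
/- Fix a continuous map ψ_reg : X^ℕ → X^ℕ. Then the half-time flow maps of the ψ_reg-regularized solutions satisfy the same RG relation as for the cut-off regularization: ψ^(N+1) = R_g[ψ^(N)] for all N ≥ 1, with initial map ψ^(1)(a) = (f(a_1, a_2), 0, 0, …) + σ_−(ψ_reg(σ_+(a))). -/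
open Filter Topology

namespace SSRG

variable {X : Type*}

/-- The `ψ_reg`-regularized solution at level `N`: the initial conditions hold at
all scales `n ≥ 1`, the ideal equations hold for `1 ≤ n ≤ N`, and the variables
at the regularized scales `n > N` evolve over each turn-over time step
`t ↦ t + τ_N` (i.e. between consecutive nonnegative integer multiples `j·τ_N`)
by the given map `ψ_reg`:
`(u_{N+1}(t+τ_N), u_{N+2}(t+τ_N), …) = ψ_reg(u_{N+1}(t), u_{N+2}(t), …)`.
At scale `N+1+k` the time `j·τ_N` has index `j·2^{k+1}`. -/
def IsPsiRegSol [AddCommMonoid X] (f g : X → X → X)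
    (ψreg : (ℕ → X) → (ℕ → X)) (N : ℕ) (a b : ℕ → X) (u : ℕ → ℕ → X) : Prop :=
  (∀ m, u 0 m = b m) ∧
  (∀ n, 1 ≤ n → u n 0 = a (n - 1)) ∧
  (∀ j : ℕ, (fun k => u (N + 1 + k) ((j + 1) * 2 ^ (k + 1))) =
      ψreg (fun k => u (N + 1 + k) (j * 2 ^ (k + 1)))) ∧
  (∀ n m, 1 ≤ n → n ≤ N → 1 ≤ m → IdealEq f g u n m)

/-!
If `u` solves the level-`(N+1)` system with data `a`, then `U_n(t) = u_{n+1}(t/2)` solves the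
level-`N` system with data `σ₊ a`, so `ψ^(N)(σ₊ a) = U(1/2)`. Shifting `U` by half a time unit
keeps the parity of the kick times on every scale `n ≥ 2` (as `2^(n-1)` is even) and commutes
with the `ψ_reg`-evolution of the regularized scales; the ideal equations determine a field on
scales `n ≥ 2` up to time `1` from its initial data and its regularized scales, so the level-`N`
solution started from `U(1/2)` agrees there with `U(1/2 + ·)`. Hence `ψ^(N)(ψ^(N)(σ₊ a))`
is `U(1) = u(1/2)` on the scales `n ≥ 3`, and the ideal equations at the first two scales give
the remaining term `ξ(a)`.
-/

/-- `tailState N u j k = u_{N+1+k}(j·τ_N)`: the regularized scales at time `j·τ_N`. -/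
def tailState (N : ℕ) (u : ℕ → ℕ → X) (j : ℕ) : ℕ → X :=
  fun k => u (N + 1 + k) (j * 2 ^ (k + 1))

/-- `halfShift u` is `t ↦ u(t + 1/2)`, as `2^(n-1)·τ_n = 1/2`. -/
def halfShift (u : ℕ → ℕ → X) : ℕ → ℕ → X :=
  fun n m => u n (2 ^ (n - 1) + m)

theorem halfState_add_eq_tailState {N : ℕ} (hN : 1 ≤ N) (u : ℕ → ℕ → X) (k : ℕ) :
    halfState u (N + k) = tailState N u (2 ^ (N - 1)) k := by
  simp only [halfState, tailState, ← pow_add]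
  rw [show N + k + 1 = N + 1 + k by omega, show N - 1 + (k + 1) = N + k by omega]

theorem unitState_add_eq_tailState (N : ℕ) (u : ℕ → ℕ → X) (k : ℕ) :
    unitState u (N + k) = tailState N u (2 ^ N) k := by
  simp only [unitState, tailState, ← pow_add]
  rw [show N + (k + 1) = N + 1 + k by omega, show N + k + 1 = N + 1 + k by omega]

theorem tailState_halfShift {N : ℕ} (hN : 1 ≤ N) (u : ℕ → ℕ → X) (j : ℕ) :
    tailState N (halfShift u) j = tailState N u (2 ^ (N - 1) + j) := by
  funext k
  simp only [tailState, halfShift, add_mul, ← pow_add]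
  congr 3; omega

section IdealSystem

variable [AddCommMonoid X] {f g : X → X → X}

theorem IdealEq.eq_of_odd {u : ℕ → ℕ → X} {n m : ℕ} (h : IdealEq f g u n m) (hm : m % 2 = 1) :
    u n m = f (u n (m - 1)) (u (n + 1) (2 * (m - 1))) := by
  rwa [IdealEq, if_pos hm] at h

theorem IdealEq.eq_of_even {u : ℕ → ℕ → X} {n m : ℕ} (h : IdealEq f g u n m) (hm : m % 2 = 0) :
    u n m = f (u n (m - 1)) (u (n + 1) (2 * (m - 1))) +
      g (u (n - 1) ((m - 2) / 2)) (u n (m - 2)) := by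
  rwa [IdealEq, if_neg (by omega)] at h

theorem idealEq_scaleShift_iff {u : ℕ → ℕ → X} {n m : ℕ} (hn : 1 ≤ n) :
    IdealEq f g (fun n => u (n + 1)) n m ↔ IdealEq f g u (n + 1) m := by
  simp only [IdealEq, Nat.sub_add_cancel hn, Nat.add_sub_cancel]

theorem IdealEq.halfShift {u : ℕ → ℕ → X} {n m : ℕ} (hn : 2 ≤ n) (hm : 1 ≤ m)
    (h : IdealEq f g u n (2 ^ (n - 1) + m)) : IdealEq f g (halfShift u) n m := by
  obtain ⟨p, hp⟩ : ∃ p, 2 ^ (n - 1) = 2 * p :=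
    ⟨2 ^ (n - 2), by rw [← pow_succ']; congr 1; omega⟩
  have hp' : 2 ^ (n + 1 - 1) = 2 * (2 * p) := by
    rw [show n + 1 - 1 = n - 1 + 1 by omega, pow_succ, hp]; ring
  have hp'' : 2 ^ (n - 1 - 1) = p := by
    rw [← Nat.mul_left_cancel_iff two_pos, ← hp, ← pow_succ']; congr 1; omega
  unfold IdealEq SSRG.halfShift at *
  rw [hp] at h
  rw [hp, hp', hp'']
  split_ifs at h ⊢ with h1 h2 h2
  · convert h using 3 <;> omega
  · omega
  · omega
  · convert h using 4 <;> omega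

theorem eq_of_idealEq_of_lt_two_pow {N : ℕ} {u w : ℕ → ℕ → X}
    (hu : ∀ n m, 2 ≤ n → n ≤ N → 1 ≤ m → IdealEq f g u n m)
    (hw : ∀ n m, 2 ≤ n → n ≤ N → 1 ≤ m → IdealEq f g w n m)
    (h0 : ∀ n, 1 ≤ n → n ≤ N → u n 0 = w n 0)
    (htail : ∀ j, u (N + 1) (2 * j) = w (N + 1) (2 * j)) :
    ∀ n m, 2 ≤ n → n ≤ N → m < 2 ^ n → u n m = w n m := by
  -- induction on the time `m·τ_n` in units of `τ_N`; each term of the ideal equation at `(n, m)`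
  -- lives at an earlier time
  suffices key : ∀ T n m, m * 2 ^ (N - n) = T → 2 ≤ n → n ≤ N → m < 2 ^ n → u n m = w n m from
    fun n m => key _ n m rfl
  intro T
  induction T using Nat.strong_induction_on with
  | _ T ih =>
  rintro n (_ | m) rfl hn hnN hm
  · exact h0 n (by omega) hnN
  have hpow : 2 ^ n = 2 * 2 ^ (n - 1) := by rw [← pow_succ']; congr 1; omega
  have hP : 0 < 2 ^ (N - n) := by positivity
  have hprev : ∀ m' ≤ m, u n m' = w n m' := fun m' hm' =>
    ih _ (Nat.mul_lt_mul_of_pos_right (by omega) hP) n m' rfl hn hnN (by omega)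
  have hfiner : u (n + 1) (2 * m) = w (n + 1) (2 * m) := by
    rcases hnN.lt_or_eq with hlt | rfl
    · have hP' : 2 ^ (N - n) = 2 * 2 ^ (N - (n + 1)) := by rw [← pow_succ']; congr 1; omega
      refine ih _ ?_ (n + 1) (2 * m) rfl (by omega) hlt (by rw [pow_succ]; omega)
      rw [hP'] at hP ⊢
      nlinarith
    · exact htail m
  have hu' := hu n (m + 1) hn hnN (by omega)
  have hw' := hw n (m + 1) hn hnN (by omega)
  unfold IdealEq at hu' hw'
  simp only [Nat.add_sub_cancel] at hu' hw'
  split_ifs at hu' hw' with hodd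
  · rw [hu', hw', hprev m le_rfl, hfiner]
  have hcoarser : u (n - 1) ((m + 1 - 2) / 2) = w (n - 1) ((m + 1 - 2) / 2) := by
    rcases (by omega : n = 2 ∨ 3 ≤ n) with rfl | hn3
    · rw [show (m + 1 - 2) / 2 = 0 by norm_num at hm; omega]
      exact h0 1 le_rfl (by omega)
    · have hP' : 2 ^ (N - (n - 1)) = 2 * 2 ^ (N - n) := by rw [← pow_succ']; congr 1; omega
      refine ih _ ?_ (n - 1) _ rfl (by omega) (by omega) (by omega)
      rw [hP']
      have : (m + 1 - 2) / 2 * 2 ≤ m := by omega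
      nlinarith
  rw [hu', hw', hprev m le_rfl, hfiner, hcoarser, hprev (m + 1 - 2) (by omega)]

end IdealSystem

namespace IsPsiRegSol

variable [AddCommMonoid X] {f g : X → X → X} {ψreg : (ℕ → X) → (ℕ → X)} {N : ℕ}
  {a b : ℕ → X} {u : ℕ → ℕ → X}

theorem tailState_succ (hu : IsPsiRegSol f g ψreg N a b u) (j : ℕ) :
    tailState N u (j + 1) = ψreg (tailState N u j) :=
  hu.2.2.1 j

theorem tailState_zero (hu : IsPsiRegSol f g ψreg N a b u) :
    tailState N u 0 = fun k => a (N + k) := by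
  funext k
  rw [tailState, zero_mul, hu.2.1 _ (by omega)]
  congr 1; omega

theorem scaleShift (hu : IsPsiRegSol f g ψreg (N + 1) a b u) :
    IsPsiRegSol f g ψreg N (sigPlus a) (u 1) (fun n => u (n + 1)) := by
  obtain ⟨-, hinit, htail, hideal⟩ := hu
  refine ⟨fun _ => rfl, fun n hn => ?_, fun j => ?_, fun n m hn hnN hm => ?_⟩
  · dsimp only
    rw [hinit (n + 1) (by omega), sigPlus]
    congr 1; omega
  · simpa only [Nat.add_right_comm] using htail j
  · exact (idealEq_scaleShift_iff hn).2 (hideal (n + 1) m (by omega) (by omega) hm)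

theorem halfState_zero (hu : IsPsiRegSol f g ψreg N a b u) (hN : 1 ≤ N) :
    halfState u 0 = f (a 0) (a 1) := by
  obtain ⟨-, hinit, -, hideal⟩ := hu
  rw [halfState, pow_zero, (hideal 1 1 le_rfl hN le_rfl).eq_of_odd rfl, hinit 1 le_rfl,
    hinit 2 (by omega)]

theorem halfState_one (hu : IsPsiRegSol f g ψreg N a b u) (hN : 2 ≤ N) :
    halfState u 1 = f (u 2 1) (u 3 2) + g (a 0) (a 1) := by
  obtain ⟨-, hinit, -, hideal⟩ := hu
  rw [halfState, pow_one, (hideal 2 2 (by norm_num) hN (by norm_num)).eq_of_even rfl]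
  simp only [Nat.reduceSub, Nat.reduceDiv, hinit 1 le_rfl, hinit 2 (by omega)]

theorem halfState_eq_unitState {b' : ℕ → X} {W : ℕ → ℕ → X}
    (hu : IsPsiRegSol f g ψreg N a b u) (hW : IsPsiRegSol f g ψreg N (halfState u) b' W)
    (hN : 1 ≤ N) {i : ℕ} (hi : 1 ≤ i) : halfState W i = unitState u i := by
  have hshift_zero : ∀ n, 1 ≤ n → halfShift u n 0 = W n 0 := fun n hn => by
    rw [hW.2.1 n hn, halfShift, halfState, add_zero, Nat.sub_add_cancel hn]
  have htail : tailState N (halfShift u) = tailState N W := by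
    funext j
    induction j with
    | zero => funext k; simp only [tailState, zero_mul]; exact hshift_zero _ (by omega)
    | succ j ih =>
      rw [hW.tailState_succ j, ← ih, tailState_halfShift hN, tailState_halfShift hN, ← add_assoc,
        hu.tailState_succ]
  have hcone := eq_of_idealEq_of_lt_two_pow
    (fun n m hn hnN hm =>
      (hu.2.2.2 n (2 ^ (n - 1) + m) (by omega) hnN (le_add_left hm)).halfShift hn hm)
    (fun n m hn hnN hm => hW.2.2.2 n m (by omega) hnN hm)
    (fun n hn _ => hshift_zero n hn)
    (fun j => by simpa [tailState, mul_comm] using congrFun (congrFun htail j) 0)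
  rcases le_or_gt (i + 1) N with hle | hlt
  · rw [halfState, ← hcone (i + 1) (2 ^ i) (by omega) hle (Nat.pow_lt_pow_succ one_lt_two),
      unitState, halfShift, Nat.add_sub_cancel, pow_succ, mul_two]
  · obtain ⟨k, rfl⟩ : ∃ k, i = N + k := ⟨i - N, by omega⟩
    rw [halfState_add_eq_tailState hN, unitState_add_eq_tailState, ← htail,
      tailState_halfShift hN, ← two_mul, ← pow_succ', Nat.sub_add_cancel hN]

theorem halfState_succ_of_level_one (hu : IsPsiRegSol f g ψreg 1 a b u) (i : ℕ) :
    halfState u (i + 1) = ψreg (sigPlus a) i := by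
  have hσ : tailState 1 u 0 = sigPlus a := by
    rw [hu.tailState_zero]; funext k; rw [sigPlus, add_comm]
  rw [add_comm, halfState_add_eq_tailState le_rfl, show 2 ^ (1 - 1) = 0 + 1 from rfl,
    hu.tailState_succ, hσ]

end IsPsiRegSol

theorem statement19_general {X : Type*} [AddCommMonoid X]
    (f g : X → X → X)
    (ψreg : (ℕ → X) → (ℕ → X))
    (ψ : ℕ → (ℕ → X) → (ℕ → X))
    (hψ : ∀ N, 1 ≤ N → ∀ (a' b' : ℕ → X) (u : ℕ → ℕ → X),
      IsPsiRegSol f g ψreg N a' b' u → ψ N a' = halfState u)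
    (hex : ∀ N, 1 ≤ N → ∀ a' b' : ℕ → X, ∃ u : ℕ → ℕ → X,
      IsPsiRegSol f g ψreg N a' b' u) :
    (∀ N, 1 ≤ N → ψ (N + 1) = RGop f g (ψ N)) ∧
    (∀ a : ℕ → X, ψ 1 a =
      (fun i => Nat.casesOn i (f (a 0) (a 1)) fun _ => 0) + sigMinus (ψreg (sigPlus a))) := by
  refine ⟨fun N hN => funext fun a => ?_, fun a => funext fun i => ?_⟩
  · obtain ⟨u, hu⟩ := hex (N + 1) (by omega) a 0
    obtain ⟨W, hW⟩ := hex N hN (halfState fun n => u (n + 1)) 0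
    rw [hψ (N + 1) (by omega) a 0 u hu, RGop, hψ N hN _ _ _ hu.scaleShift, hψ N hN _ _ W hW]
    funext i
    rcases i with _ | _ | i
    · simp only [hu.halfState_zero (by omega), Pi.add_apply, sigMinus, xiMap, zero_add]
    · simp only [hu.halfState_one (by omega), hW.halfState_zero hN, Pi.add_apply, sigMinus, xiMap,
        zero_add]
      rfl
    · simp only [Pi.add_apply, sigMinus, xiMap, add_zero]
      exact (hu.scaleShift.halfState_eq_unitState hW hN (by omega)).symm
  · obtain ⟨u, hu⟩ := hex 1 le_rfl a 0
    rw [hψ 1 le_rfl a 0 u hu]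
    rcases i with _ | i
    · simp only [hu.halfState_zero le_rfl, Pi.add_apply, Nat.rec_zero, sigMinus, add_zero]
    · simp only [hu.halfState_succ_of_level_one, Pi.add_apply, sigMinus, zero_add]

/-- Fix a continuous map `ψ_reg : X^ℕ → X^ℕ`.  The half-time
flow maps `ψ N` of the `ψ_reg`-regularized solutions (pinned down via `hψ`,
`hex`; they do not depend on the boundary conditions) satisfy the same RG
relation as for the cut-off regularization: `ψ^{(N+1)} = R_g[ψ^{(N)}]` for all
`N ≥ 1`, with the initial map
`ψ^{(1)}(a) = (f(a₁,a₂), 0, 0, …) + σ₋(ψ_reg(σ₊(a)))`. -/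
theorem statement19 {X : Type*} [MetricSpace X] [CompleteSpace X]
    [TopologicalSpace.SeparableSpace X] [AddCommMonoid X] [ContinuousAdd X]
    (f g : X → X → X) (hf : Continuous fun p : X × X => f p.1 p.2)
    (hg : Continuous fun p : X × X => g p.1 p.2)
    (ψreg : (ℕ → X) → (ℕ → X)) (hψreg : Continuous ψreg)
    (ψ : ℕ → (ℕ → X) → (ℕ → X))
    (hψ : ∀ N, 1 ≤ N → ∀ (a' b' : ℕ → X) (u : ℕ → ℕ → X),
      IsPsiRegSol f g ψreg N a' b' u → ψ N a' = halfState u)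
    (hex : ∀ N, 1 ≤ N → ∀ a' b' : ℕ → X, ∃ u : ℕ → ℕ → X,
      IsPsiRegSol f g ψreg N a' b' u) :
    (∀ N, 1 ≤ N → ψ (N + 1) = RGop f g (ψ N)) ∧
    (∀ a : ℕ → X, ψ 1 a =
      (fun i => Nat.casesOn i (f (a 0) (a 1)) fun _ => 0) + sigMinus (ψreg (sigPlus a))) :=
  statement19_general f g ψreg ψ hψ hex

end SSRG
end
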